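/- arXiv:2401.12067 — 2 statements merged into one kernel-verified Lean document; each statement's English description precedes it below -/
import Mathlib

section
/- For every marking M of a net there exists a reachable marking M' such that every transition is either dead at M' or live at M' (i.e., D_{M'} ∪ L_{M'} = T). -/
open Classical

/-- A net: flow from places to transitions (`Fpt`) and transitions to places (`Ftp`). -/
structure Net (P T : Type) where
  Fpt : P → T → Prop
  Ftp : T → P → Prop

namespace Net

variable {P T : Type}

/-- Input places of a transition. -/
def preT (N : Net P T) (t : T) : Set P := {p | N.Fpt p t}
/-- Output places of a transition. -/
def postT (N : Net P T) (t : T) : Set P := {p | N.Ftp t p}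
/-- Transitions producing into a set of places. -/
def preS (N : Net P T) (S : Set P) : Set T := {t | ∃ p ∈ S, N.Ftp t p}
/-- Transitions consuming from a set of places. -/
def postS (N : Net P T) (S : Set P) : Set T := {t | ∃ p ∈ S, N.Fpt p t}
/-- A trap: every transition consuming from `Q` produces into `Q`. -/
def isTrap (N : Net P T) (Q : Set P) : Prop := N.postS Q ⊆ N.preS Q
/-- A siphon: every transition producing into `S` consumes from `S`. -/
def isSiphon (N : Net P T) (S : Set P) : Prop := N.preS S ⊆ N.postS S
/-- The maximal trap contained in `S`: union of all traps inside `S`. -/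
def maxTrap (N : Net P T) (S : Set P) : Set P := ⋃₀ {Q | N.isTrap Q ∧ Q ⊆ S}
/-- Free choice: input-sharing transitions have equal presets. -/
def freeChoice (N : Net P T) : Prop :=
  ∀ t t' : T, (N.preT t ∩ N.preT t').Nonempty → N.preT t = N.preT t'
/-- `t` is enabled at marking `M`. -/
def enabled (N : Net P T) (t : T) (M : P → ℕ) : Prop := ∀ p ∈ N.preT t, 1 ≤ M p
/-- Firing `t` at `M` yields `M'`. -/
def fires (N : Net P T) (t : T) (M M' : P → ℕ) : Prop :=
  N.enabled t M ∧
    ∀ p, M' p = M p - (if p ∈ N.preT t then 1 else 0) + (if p ∈ N.postT t then 1 else 0)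
/-- Reachability: reflexive-transitive closure of single firings. -/
def reach (N : Net P T) : (P → ℕ) → (P → ℕ) → Prop :=
  Relation.ReflTransGen (fun M M' => ∃ t, N.fires t M M')
/-- Firing a whole sequence of transitions. -/
def firesList (N : Net P T) : List T → (P → ℕ) → (P → ℕ) → Prop
  | [], M, M' => M' = M
  | t :: σ, M, M' => ∃ M₁, N.fires t M M₁ ∧ N.firesList σ M₁ M'
/-- `t` is dead at `M`: no reachable marking enables it. -/
def dead (N : Net P T) (t : T) (M : P → ℕ) : Prop :=
  ∀ M', N.reach M M' → ¬ N.enabled t M'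
/-- `t` is live at `M`: it is dead at no reachable marking. -/
def live (N : Net P T) (t : T) (M : P → ℕ) : Prop :=
  ∀ M', N.reach M M' → ¬ N.dead t M'

end Net

/-! Dead sets only grow along firing sequences, and there are finitely many of them. A reachable
marking whose dead set is maximal among reachable markings therefore has a dead set that no further
firing enlarges, so every transition that is not dead there can never become dead, i.e. is live. -/

namespace Net

variable {P T : Type} (N : Net P T)

def deadSet (M : P → ℕ) : Set T := {t | N.dead t M}

theorem dead_of_reach {t : T} {M M' : P → ℕ} (h : N.reach M M') (hd : N.dead t M) :
    N.dead t M' :=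
  fun _ h' => hd _ (h.trans h')

theorem deadSet_mono_of_reach {M M' : P → ℕ} (h : N.reach M M') : N.deadSet M ⊆ N.deadSet M' :=
  fun _ => N.dead_of_reach h

theorem dead_or_live_of_deadSet_stable {M : P → ℕ}
    (hstable : ∀ M', N.reach M M' → N.deadSet M' ⊆ N.deadSet M) (t : T) :
    N.dead t M ∨ N.live t M :=
  or_iff_not_imp_left.2 fun hnd M' hr hd => hnd (hstable M' hr hd)

theorem exists_reach_deadSet_stable [Finite T] (M : P → ℕ) :
    ∃ M', N.reach M M' ∧ ∀ M'', N.reach M' M'' → N.deadSet M'' ⊆ N.deadSet M' := by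
  obtain ⟨M', hM', hmax⟩ := Set.Finite.exists_maximalFor' N.deadSet {M' | N.reach M M'}
    (Set.toFinite _) ⟨M, Relation.ReflTransGen.refl⟩
  exact ⟨M', hM', fun M'' hr => hmax (hM'.trans hr) (N.deadSet_mono_of_reach hr)⟩

end Net

/-- from any marking one can reach a marking where every transition
is dead or live. -/
theorem exists_reach_dead_or_live {P T : Type} [Fintype T] (N : Net P T) (M : P → ℕ) :
    ∃ M', N.reach M M' ∧ ∀ t : T, N.dead t M' ∨ N.live t M' := by
  obtain ⟨M', hreach, hstable⟩ := N.exists_reach_deadSet_stable M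
  exact ⟨M', hreach, N.dead_or_live_of_deadSet_stable hstable⟩
end

section
/- Let S be a siphon of a net whose maximal contained trap is Q ⊊ S. Then there exist k ≤ |S \ Q|, transitions t₁,…,t_k ∈ post(S), and a strictly decreasing chain S = R₁ ⊋ R₂ ⊋ ⋯ ⊋ R_k ⊋ Q with R_i = S \ pre({t₁,…,t_{i−1}}), such that for each i: pre(t_i) ∩ R_i ≠ ∅, post(t_i) ∩ R_i = ∅, pre(t_i) ∩ Q = ∅, and S \ pre({t₁,…,t_k}) = Q. -/
open Classical

/-!
A set of places `R` with `Q ⊊ R ⊆ S` strictly contains the maximal trap `Q` of `S`, so it is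
not a trap: some transition consumes from `R` without producing into `R`, and it cannot consume
from the trap `Q`. Removing its input places from `R` keeps `Q` and shrinks `R \ Q`, so iterating
from `R = S` reaches `Q` after at most `|S \ Q|` steps.
-/

namespace Net

variable {P T : Type} (N : Net P T)

lemma maxTrap_isTrap (S : Set P) : N.isTrap (N.maxTrap S) := by
  rintro t ⟨p, ⟨Q, ⟨hQ, hQS⟩, hpQ⟩, hpt⟩
  obtain ⟨q, hqQ, hqt⟩ := hQ ⟨p, hpQ, hpt⟩
  exact ⟨q, ⟨Q, ⟨hQ, hQS⟩, hqQ⟩, hqt⟩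

lemma subset_maxTrap {S Q : Set P} (hQ : N.isTrap Q) (hQS : Q ⊆ S) : Q ⊆ N.maxTrap S :=
  Set.subset_sUnion_of_mem ⟨hQ, hQS⟩

lemma preS_mono {R S : Set P} (h : R ⊆ S) : N.preS R ⊆ N.preS S :=
  fun _ ⟨p, hp, hpt⟩ => ⟨p, h hp, hpt⟩

lemma exists_priority_transition {Q R : Set P} (hQ : N.isTrap Q)
    (hmax : ∀ Q', N.isTrap Q' → Q' ⊆ R → Q' ⊆ Q) (hQR : Q ⊂ R) :
    ∃ t, (N.preT t ∩ R).Nonempty ∧ N.postT t ∩ R = ∅ ∧ N.preT t ∩ Q = ∅ := by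
  have hR : ¬ N.isTrap R := fun hR => hQR.not_subset (hmax R hR subset_rfl)
  obtain ⟨t, ⟨p, hpR, hpt⟩, htR⟩ := Set.not_subset.mp hR
  refine ⟨t, ⟨p, hpt, hpR⟩, ?_, ?_⟩
  · exact Set.eq_empty_of_forall_notMem fun q ⟨hqt, hqR⟩ => htR ⟨q, hqR, hqt⟩
  · exact Set.eq_empty_of_forall_notMem fun q ⟨hqt, hqQ⟩ =>
      htR (N.preS_mono hQR.subset (hQ ⟨q, hqQ, hqt⟩))

variable {k : ℕ}

def consumedBefore (t : Fin k → T) (i : Fin k) : Set P :=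
  {p | ∃ j, j < i ∧ p ∈ N.preT (t j)}

def consumed (t : Fin k → T) : Set P := {p | ∃ i, p ∈ N.preT (t i)}

lemma consumedBefore_mono {t : Fin k → T} {i j : Fin k} (hij : i ≤ j) :
    N.consumedBefore t i ⊆ N.consumedBefore t j :=
  fun _ ⟨l, hl, hp⟩ => ⟨l, hl.trans_le hij, hp⟩

lemma consumedBefore_subset_consumed (t : Fin k → T) (i : Fin k) :
    N.consumedBefore t i ⊆ N.consumed t :=
  fun _ ⟨j, _, hp⟩ => ⟨j, hp⟩

lemma consumedBefore_zero (t : Fin (k + 1) → T) : N.consumedBefore t 0 = ∅ :=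
  Set.eq_empty_of_forall_notMem fun _ ⟨j, hj, _⟩ => (Fin.zero_le j).not_gt hj

lemma consumedBefore_cons_succ (t₀ : T) (t : Fin k → T) (i : Fin k) :
    N.consumedBefore (Fin.cons t₀ t : Fin (k + 1) → T) i.succ =
      N.preT t₀ ∪ N.consumedBefore t i := by
  ext p
  simp [consumedBefore, Fin.exists_fin_succ, Fin.succ_pos]

lemma consumed_cons (t₀ : T) (t : Fin k → T) :
    N.consumed (Fin.cons t₀ t : Fin (k + 1) → T) = N.preT t₀ ∪ N.consumed t := by
  ext p
  simp [consumed, Fin.exists_fin_succ]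

/-- The stages `R_i` of the chain are `R \ N.consumedBefore t i`. -/
structure IsPriorityChain (Q R : Set P) (t : Fin k → T) : Prop where
  pre_inter_nonempty : ∀ i, (N.preT (t i) ∩ (R \ N.consumedBefore t i)).Nonempty
  post_inter_eq_empty : ∀ i, N.postT (t i) ∩ (R \ N.consumedBefore t i) = ∅
  pre_inter_eq_empty : ∀ i, N.preT (t i) ∩ Q = ∅
  diff_consumed : R \ N.consumed t = Q

namespace IsPriorityChain

variable {N} {Q R : Set P} {t : Fin k → T}

lemma nil : N.IsPriorityChain Q Q (Fin.elim0 : Fin 0 → T) :=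
  ⟨fun i => i.elim0, fun i => i.elim0, fun i => i.elim0, by simp [consumed]⟩

lemma cons {t₀ : T} (h₀ : (N.preT t₀ ∩ R).Nonempty) (h₀' : N.postT t₀ ∩ R = ∅)
    (h₀Q : N.preT t₀ ∩ Q = ∅) (h : N.IsPriorityChain Q (R \ N.preT t₀) t) :
    N.IsPriorityChain Q R (Fin.cons t₀ t : Fin (k + 1) → T) where
  pre_inter_nonempty := Fin.cases (by simpa [consumedBefore_zero] using h₀) fun i => by
    simpa [consumedBefore_cons_succ, Set.sdiff_sdiff] using h.pre_inter_nonempty i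
  post_inter_eq_empty := Fin.cases (by simpa [consumedBefore_zero] using h₀') fun i => by
    simpa [consumedBefore_cons_succ, Set.sdiff_sdiff] using h.post_inter_eq_empty i
  pre_inter_eq_empty := Fin.cases h₀Q h.pre_inter_eq_empty
  diff_consumed := by rw [consumed_cons, ← Set.sdiff_sdiff, h.diff_consumed]

lemma notMem_of_mem_preT (h : N.IsPriorityChain Q R t) {i : Fin k} {p : P}
    (hp : p ∈ N.preT (t i)) : p ∉ Q :=
  fun hpQ => (h.pre_inter_eq_empty i).subset ⟨hp, hpQ⟩

lemma trap_subset_stage (h : N.IsPriorityChain Q R t) (i : Fin k) :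
    Q ⊆ R \ N.consumedBefore t i := by
  rw [← h.diff_consumed]
  exact Set.sdiff_subset_sdiff_right (N.consumedBefore_subset_consumed t i)

lemma trap_ssubset_stage (h : N.IsPriorityChain Q R t) (i : Fin k) :
    Q ⊂ R \ N.consumedBefore t i := by
  obtain ⟨p, hpt, hpR⟩ := h.pre_inter_nonempty i
  exact ssubset_of_subset_not_superset (h.trap_subset_stage i)
    fun hsub => h.notMem_of_mem_preT hpt (hsub hpR)

lemma stage_ssubset_stage (h : N.IsPriorityChain Q R t) {i j : Fin k} (hij : i < j) :
    R \ N.consumedBefore t j ⊂ R \ N.consumedBefore t i := by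
  obtain ⟨p, hpt, hpR⟩ := h.pre_inter_nonempty i
  exact ssubset_of_subset_not_superset
    (Set.sdiff_subset_sdiff_right (N.consumedBefore_mono hij.le))
    fun hsub => (hsub hpR).2 ⟨i, hij, hpt⟩

lemma mem_postS (h : N.IsPriorityChain Q R t) (i : Fin k) : t i ∈ N.postS R := by
  obtain ⟨p, hpt, hpR⟩ := h.pre_inter_nonempty i
  exact ⟨p, hpR.1, hpt⟩

end IsPriorityChain

lemma exists_isPriorityChain {Q R : Set P} (hQ : N.isTrap Q)
    (hmax : ∀ Q', N.isTrap Q' → Q' ⊆ R → Q' ⊆ Q) (hQR : Q ⊆ R) (hfin : (R \ Q).Finite) :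
    ∃ (k : ℕ) (t : Fin k → T), k ≤ (R \ Q).ncard ∧ N.IsPriorityChain Q R t := by
  induction h : (R \ Q).ncard using Nat.strong_induction_on generalizing R with
  | _ n ih =>
    obtain rfl | hQR := hQR.eq_or_ssubset
    · exact ⟨0, Fin.elim0, Nat.zero_le _, .nil⟩
    obtain ⟨t₀, ⟨p, hpt, hpR⟩, h₀', h₀Q⟩ := N.exists_priority_transition hQ hmax hQR
    have hpQ : p ∉ Q := fun hpQ => h₀Q.subset ⟨hpt, hpQ⟩
    have hQR' : Q ⊆ R \ N.preT t₀ := fun q hq =>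
      ⟨hQR.subset hq, fun hqt => h₀Q.subset ⟨hqt, hq⟩⟩
    have hshrink : (R \ N.preT t₀) \ Q ⊂ R \ Q :=
      ssubset_of_subset_not_superset (Set.sdiff_subset_sdiff_left Set.sdiff_subset)
        fun hsub => (hsub ⟨hpR, hpQ⟩).1.2 hpt
    have hlt := Set.ncard_lt_ncard hshrink hfin
    obtain ⟨k, t, hk, ht⟩ := ih _ (h ▸ hlt)
      (fun Q' hQ' hQ'R => hmax Q' hQ' (hQ'R.trans Set.sdiff_subset)) hQR'
      (hfin.subset hshrink.subset) rfl
    exact ⟨k + 1, Fin.cons t₀ t, by omega, .cons ⟨p, hpt, hpR⟩ h₀' h₀Q ht⟩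

end Net

theorem priority_chain_general {P T : Type} [Fintype P] (N : Net P T) (S : Set P)
    (hQ : N.maxTrap S ⊂ S) :
    ∃ (k : ℕ) (t : Fin k → T) (R : Fin k → Set P),
      k ≤ (S \ N.maxTrap S).ncard ∧
      (∀ i, t i ∈ N.postS S) ∧
      (∀ i, R i = S \ {p | ∃ j, j < i ∧ p ∈ N.preT (t j)}) ∧
      (∀ i j : Fin k, i < j → R j ⊂ R i) ∧
      (∀ h0 : 0 < k, R ⟨0, h0⟩ = S) ∧
      (∀ i, N.maxTrap S ⊂ R i) ∧
      (∀ i, (N.preT (t i) ∩ R i).Nonempty) ∧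
      (∀ i, N.postT (t i) ∩ R i = ∅) ∧
      (∀ i, N.preT (t i) ∩ N.maxTrap S = ∅) ∧
      S \ {p | ∃ i, p ∈ N.preT (t i)} = N.maxTrap S := by
  obtain ⟨k, t, hk, ht⟩ := N.exists_isPriorityChain (N.maxTrap_isTrap S)
    (fun _ hQ' hQ'S => N.subset_maxTrap hQ' hQ'S) hQ.subset (Set.toFinite _)
  refine ⟨k, t, fun i => S \ N.consumedBefore t i, hk, ht.mem_postS, fun _ => rfl,
    fun _ _ => ht.stage_ssubset_stage, fun h0 => ?_, ht.trap_ssubset_stage,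
    ht.pre_inter_nonempty, ht.post_inter_eq_empty, ht.pre_inter_eq_empty, ht.diff_consumed⟩
  obtain ⟨k, rfl⟩ := Nat.exists_eq_add_of_lt h0
  simpa using congrArg (S \ ·) (N.consumedBefore_zero t)

/-- the priority-transition chain construction for a siphon whose
maximal trap is proper. -/
theorem priority_chain {P T : Type} [Fintype P] (N : Net P T) (S : Set P)
    (hS : N.isSiphon S) (hQ : N.maxTrap S ⊂ S) :
    ∃ (k : ℕ) (t : Fin k → T) (R : Fin k → Set P),
      k ≤ (S \ N.maxTrap S).ncard ∧
      (∀ i, t i ∈ N.postS S) ∧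
      (∀ i, R i = S \ {p | ∃ j, j < i ∧ p ∈ N.preT (t j)}) ∧
      (∀ i j : Fin k, i < j → R j ⊂ R i) ∧
      (∀ h0 : 0 < k, R ⟨0, h0⟩ = S) ∧
      (∀ i, N.maxTrap S ⊂ R i) ∧
      (∀ i, (N.preT (t i) ∩ R i).Nonempty) ∧
      (∀ i, N.postT (t i) ∩ R i = ∅) ∧
      (∀ i, N.preT (t i) ∩ N.maxTrap S = ∅) ∧
      S \ {p | ∃ i, p ∈ N.preT (t i)} = N.maxTrap S :=
  priority_chain_general N S hQ
end
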